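/- Let ε = e^{2πi/3}, E = diag(1, ε², ε, 1), and J₁ the antidiagonal matrix with entries (1, 1, 1, 1). Define the linear maps σ(X) = E X E⁻¹ and τ₁(X) = −J₁ Xᵗ J₁ on 4×4 complex matrices. Then σ and τ₁ commute, σ³ = id, τ₁² = id, and κ = τ₁ ∘ σ satisfies κ⁶ = id and κ³ = τ₁; in particular κ is an automorphism of order six of sl₄(ℂ). -/
import Mathlib


open Matrix

noncomputable section

/-- The primitive cube root of unity `ε = e^{2πi/3}`. -/
def ε : ℂ := Complex.exp (2 * Real.pi * Complex.I / 3)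

/-- `E = diag(1, ε², ε, 1)`. -/
def Emat : Matrix (Fin 4) (Fin 4) ℂ := Matrix.diagonal ![1, ε ^ 2, ε, 1]

/-- The antidiagonal matrix `J₁ = offdiag(1,1,1,1)`. -/
def J₁ : Matrix (Fin 4) (Fin 4) ℂ := !![0,0,0,1; 0,0,1,0; 0,1,0,0; 1,0,0,0]

/-- `σ(X) = E X E⁻¹`. -/
def σ (X : Matrix (Fin 4) (Fin 4) ℂ) : Matrix (Fin 4) (Fin 4) ℂ := Emat * X * Emat⁻¹

/-- `τ₁(X) = −J₁ Xᵗ J₁`. -/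
def τ₁ (X : Matrix (Fin 4) (Fin 4) ℂ) : Matrix (Fin 4) (Fin 4) ℂ := -(J₁ * Xᵀ * J₁)

/-- `κ = τ₁ ∘ σ`. -/
def κ (X : Matrix (Fin 4) (Fin 4) ℂ) : Matrix (Fin 4) (Fin 4) ℂ := τ₁ (σ X)

lemma eps_cube : ε ^ 3 = 1 := by
  rw [ε, ← Complex.exp_nat_mul]
  rw [show (3 : ℕ) * (2 * (Real.pi : ℂ) * Complex.I / 3) = 2 * Real.pi * Complex.I by
    push_cast; ring]
  exact Complex.exp_two_pi_mul_I

lemma hE3 : Emat * (Emat * Emat) = 1 := by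
  have h := eps_cube
  rw [Emat, Matrix.diagonal_mul_diagonal, Matrix.diagonal_mul_diagonal, ← Matrix.diagonal_one]
  refine congrArg Matrix.diagonal (funext fun i => ?_)
  fin_cases i <;> simp <;>
    first
    | linear_combination h
    | linear_combination (ε ^ 3 + 1) * h

lemma hinv : Emat⁻¹ = Emat * Emat := inv_eq_right_inv hE3

lemma hE2 : Emat * Emat = Matrix.diagonal ![1, ε, ε ^ 2, 1] := by
  have h := eps_cube
  rw [Emat, Matrix.diagonal_mul_diagonal]
  refine congrArg Matrix.diagonal (funext fun i => ?_)
  fin_cases i <;> simp <;>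
    first
    | ring1
    | linear_combination ε * h

lemma sigma_apply (X : Matrix (Fin 4) (Fin 4) ℂ) (i j : Fin 4) :
    σ X i j = ![1, ε ^ 2, ε, 1] i * X i j * ![1, ε, ε ^ 2, 1] j := by
  rw [σ, hinv, hE2, Emat, Matrix.mul_diagonal, Matrix.diagonal_mul]

lemma tau_apply (X : Matrix (Fin 4) (Fin 4) ℂ) (i j : Fin 4) :
    τ₁ X i j = -X (![3,2,1,0] j) (![3,2,1,0] i) := by
  fin_cases i <;> fin_cases j <;>
    simp [τ₁, J₁, Matrix.mul_apply, Fin.sum_univ_four, -Matrix.cons_mul,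
      Matrix.vecHead, Matrix.vecTail]

lemma hc : ∀ X : Matrix (Fin 4) (Fin 4) ℂ, σ (τ₁ X) = τ₁ (σ X) := by
  intro X
  ext i j
  rw [sigma_apply, tau_apply, tau_apply, sigma_apply]
  fin_cases i <;> fin_cases j <;> simp <;> ring

lemma ht : ∀ X : Matrix (Fin 4) (Fin 4) ℂ, τ₁ (τ₁ X) = X := by
  intro X
  ext i j
  rw [tau_apply, tau_apply]
  fin_cases i <;> fin_cases j <;> simp

lemma hE3l : Emat * Emat * Emat = 1 := by rw [mul_assoc]; exact hE3

lemma h6 : Emat * (Emat * (Emat * (Emat * (Emat * Emat)))) = 1 := by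
  simp only [← mul_assoc]
  rw [hE3l, one_mul, hE3l]

lemma hs : ∀ X : Matrix (Fin 4) (Fin 4) ℂ, σ (σ (σ X)) = X := by
  intro X
  simp only [σ, hinv, mul_assoc]
  rw [h6, mul_one, ← mul_assoc, ← mul_assoc, hE3l, one_mul]

/-- `σ` and `τ₁` commute, `σ³ = id`, `τ₁² = id`, and `κ = τ₁ ∘ σ` satisfies `κ⁶ = id`
and `κ³ = τ₁`; in particular `κ` is an automorphism of order six of `sl₄(ℂ)`. -/
theorem kappa_order_six :
    (∀ X : Matrix (Fin 4) (Fin 4) ℂ, σ (τ₁ X) = τ₁ (σ X)) ∧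
    (∀ X : Matrix (Fin 4) (Fin 4) ℂ, σ (σ (σ X)) = X) ∧
    (∀ X : Matrix (Fin 4) (Fin 4) ℂ, τ₁ (τ₁ X) = X) ∧
    (∀ X : Matrix (Fin 4) (Fin 4) ℂ, κ (κ (κ (κ (κ (κ X))))) = X) ∧
    (∀ X : Matrix (Fin 4) (Fin 4) ℂ, κ (κ (κ X)) = τ₁ X) := by
  have k3 : ∀ X : Matrix (Fin 4) (Fin 4) ℂ, κ (κ (κ X)) = τ₁ X := by
    intro X
    simp only [κ]
    rw [hc, ht, hc, hc, hs]
  refine ⟨hc, hs, ht, ?_, k3⟩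
  intro X
  rw [k3, k3, ht]
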